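/- In the Artin group A(6,3,2) = ⟨s, t, r | ststst = tststs, trt = rtr, sr = rs⟩, for every k ≥ 1 and all nonzero integers n_1, …, n_k, the element ststsrtstr commutes with the element (t^{n_1} s t s t r)(t^{n_2} s t s t r) ⋯ (t^{n_k} s t s t r). In particular, for each such product w, the subgroup ⟨ststsrtstr, w⟩ of A(6,3,2) is abelian. -/

import Mathlib

namespace A632

/-- The defining relations of the Artin group
`A(6,3,2) = ⟨s, t, r | ststst = tststs, trt = rtr, sr = rs⟩`,
with `0, 1, 2` playing the roles of `s, t, r`. -/
def rels : Set (FreeGroup (Fin 3)) :=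
  { FreeGroup.of 0 * FreeGroup.of 1 * FreeGroup.of 0 * FreeGroup.of 1 *
      FreeGroup.of 0 * FreeGroup.of 1 *
      (FreeGroup.of 1 * FreeGroup.of 0 * FreeGroup.of 1 * FreeGroup.of 0 *
        FreeGroup.of 1 * FreeGroup.of 0)⁻¹,
    FreeGroup.of 1 * FreeGroup.of 2 * FreeGroup.of 1 *
      (FreeGroup.of 2 * FreeGroup.of 1 * FreeGroup.of 2)⁻¹,
    FreeGroup.of 0 * FreeGroup.of 2 * (FreeGroup.of 2 * FreeGroup.of 0)⁻¹ }

/-- The Artin group `A(6,3,2)`. -/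
abbrev Grp := PresentedGroup rels

def s : Grp := PresentedGroup.of 0
def t : Grp := PresentedGroup.of 1
def r : Grp := PresentedGroup.of 2

end A632

/-! With `y = ststr`, the relation `sr = rs` gives `ststsrtstr = y²`. Conjugation by `y` swaps
`t` and `(st) r (st)⁻¹`: the first uses `rtr⁻¹ = t⁻¹rt` (from `trt = rtr`), the second also
`ststst = tststs`. Hence `y²` commutes with `t` and with `y`, so with every factor `tⁿ y` and
with every product of such factors. -/

section
variable {G : Type*} [Group G] {s t r : G}

theorem Subgroup.isMulCommutative_closure_pair {a b : G} (h : Commute a b) :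
    IsMulCommutative (Subgroup.closure {a, b}) :=
  Subgroup.isMulCommutative_closure <| by
    rintro x (rfl | rfl) y (rfl | rfl)
    exacts [rfl, h.eq, h.symm.eq, rfl]

theorem commute_sq_of_conj_swap {y a b : G} (h₁ : y * a * y⁻¹ = b) (h₂ : y * b * y⁻¹ = a) :
    Commute (y ^ 2) a := by
  rw [Commute, SemiconjBy, ← mul_inv_eq_iff_eq_mul]
  calc y ^ 2 * a * (y ^ 2)⁻¹ = y * (y * a * y⁻¹) * y⁻¹ := by rw [sq]; group
    _ = a := by rw [h₁, h₂]

theorem conj_eq_of_braid (h : t * r * t = r * t * r) : r * t * r⁻¹ = t⁻¹ * r * t :=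
  calc r * t * r⁻¹ = t⁻¹ * (t * r * t) * r⁻¹ := by group
    _ = t⁻¹ * r * t := by rw [h]; group

theorem ststr_conj_t (h_tr : t * r * t = r * t * r) (h_sr : s * r = r * s) :
    (s * t * s * t * r) * t * (s * t * s * t * r)⁻¹ = (s * t) * r * (s * t)⁻¹ :=
  calc (s * t * s * t * r) * t * (s * t * s * t * r)⁻¹
      = (s * t * s * t) * (r * t * r⁻¹) * (s * t * s * t)⁻¹ := by group
    _ = (s * t) * (s * r * s⁻¹) * (s * t)⁻¹ := by rw [conj_eq_of_braid h_tr]; group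
    _ = (s * t) * r * (s * t)⁻¹ := by rw [mul_inv_eq_iff_eq_mul.mpr h_sr]

theorem ststr_conj_st_conj_r (h_st : s * t * s * t * s * t = t * s * t * s * t * s)
    (h_tr : t * r * t = r * t * r) (h_sr : s * r = r * s) :
    (s * t * s * t * r) * ((s * t) * r * (s * t)⁻¹) * (s * t * s * t * r)⁻¹ = t :=
  calc (s * t * s * t * r) * ((s * t) * r * (s * t)⁻¹) * (s * t * s * t * r)⁻¹
      = (s * t * s * t) * (r * s) * t * r * t⁻¹ * (r * s)⁻¹ * (s * t * s * t)⁻¹ := by group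
    _ = (s * t * s * t * s) * (r * t * r) * (t⁻¹ * r⁻¹) * (s * t * s * t * s)⁻¹ := by
      rw [← h_sr]; group
    _ = (s * t * s * t * s * t) * (s * t * s * t * s)⁻¹ := by rw [← h_tr]; group
    _ = t := by rw [h_st]; group

theorem commute_ststr_sq_t (h_st : s * t * s * t * s * t = t * s * t * s * t * s)
    (h_tr : t * r * t = r * t * r) (h_sr : s * r = r * s) :
    Commute ((s * t * s * t * r) ^ 2) t :=
  commute_sq_of_conj_swap (ststr_conj_t h_tr h_sr) (ststr_conj_st_conj_r h_st h_tr h_sr)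

theorem ststsrtstr_eq_sq (h_sr : s * r = r * s) :
    s * t * s * t * s * r * t * s * t * r = (s * t * s * t * r) ^ 2 :=
  calc s * t * s * t * s * r * t * s * t * r = s * t * s * t * (s * r) * t * s * t * r := by group
    _ = (s * t * s * t * r) ^ 2 := by rw [h_sr, sq]; group

end

namespace A632

theorem st_braid : s * t * s * t * s * t = t * s * t * s * t * s :=
  PresentedGroup.mk_eq_mk_of_mul_inv_mem (by simp [rels])

theorem tr_braid : t * r * t = r * t * r :=
  PresentedGroup.mk_eq_mk_of_mul_inv_mem (by simp [rels])

theorem sr_comm : s * r = r * s :=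
  PresentedGroup.mk_eq_mk_of_mul_inv_mem (by simp [rels])

end A632

open A632 in
theorem A632_ststsrtstr_commutes_general (k : ℕ) (n : Fin k → ℤ) :
    Commute (s * t * s * t * s * r * t * s * t * r)
      (((List.finRange k).map fun p => t ^ n p * s * t * s * t * r).prod) ∧
    IsMulCommutative (Subgroup.closure {s * t * s * t * s * r * t * s * t * r,
      ((List.finRange k).map fun p => t ^ n p * s * t * s * t * r).prod}) := by
  rw [ststsrtstr_eq_sq sr_comm]
  have hx_t := commute_ststr_sq_t st_braid tr_braid sr_comm
  have hx_y : Commute ((s * t * s * t * r) ^ 2) (s * t * s * t * r) := Commute.pow_self _ 2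
  have hx_w : Commute ((s * t * s * t * r) ^ 2)
      ((List.finRange k).map fun p => t ^ n p * s * t * s * t * r).prod := by
    refine Commute.list_prod_right _ _ ?_
    simp only [List.mem_map]
    rintro _ ⟨p, -, rfl⟩
    simpa only [mul_assoc] using (hx_t.zpow_right (n p)).mul_right hx_y
  exact ⟨hx_w, Subgroup.isMulCommutative_closure_pair hx_w⟩

open A632 in
/-- In `A(6,3,2)`, the element `ststsrtstr` commutes with every product
`(t^{n₁}ststr)⋯(t^{n_k}ststr)` with all `nᵢ` nonzero; in particular the subgroup
generated by `ststsrtstr` and such a product is abelian. -/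
theorem A632_ststsrtstr_commutes (k : ℕ) (hk : 1 ≤ k) (n : Fin k → ℤ) (hn : ∀ p, n p ≠ 0) :
    Commute (s * t * s * t * s * r * t * s * t * r)
      (((List.finRange k).map fun p => t ^ n p * s * t * s * t * r).prod) ∧
    IsMulCommutative (Subgroup.closure {s * t * s * t * s * r * t * s * t * r,
      ((List.finRange k).map fun p => t ^ n p * s * t * s * t * r).prod}) :=
  A632_ststsrtstr_commutes_general k n
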